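/- arXiv:1801.04063 — 8 statements merged into one kernel-verified Lean document; each statement's English description precedes it below -/
import Mathlib

section
/- Let f : ℝ → ℝ be a measurable probability density (f ≥ 0, ∫_ℝ f = 1) that is bounded, i.e., there is M ≥ 0 with f(x) ≤ M for all x. Then the series ∑_{n=1}^∞ ((−1)^n / n!) · ∫_ℝ f(x)^{n+1} dx converges and ∫_ℝ f(x)·e^{-f(x)} dx = 1 + ∑_{n=1}^∞ ((−1)^n / n!) · ∫_ℝ f(x)^{n+1} dx. -/
/-!
Expand `y e^{-y} = ∑ₙ (-1)ⁿ yⁿ⁺¹ / n!` pointwise. When `|f| ≤ M`, the `n`-th term has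
`∫ |f|ⁿ⁺¹ / n! ≤ (Mⁿ / n!) ∫ |f|`, a summable bound, so integral and sum may be interchanged.
The `n = 0` term is `∫ f = 1`.
-/

open MeasureTheory Real

theorem Real.hasSum_mul_exp_neg (y : ℝ) :
    HasSum (fun n : ℕ => (-1 : ℝ) ^ n / n.factorial * y ^ (n + 1)) (y * exp (-y)) := by
  rw [exp_eq_exp_ℝ]
  refine ((NormedSpace.expSeries_div_hasSum_exp (-y)).mul_left y).congr_fun fun n => ?_
  rw [neg_pow]
  ring

theorem Real.norm_pow_succ_le_of_norm_le {y M : ℝ} (hy : ‖y‖ ≤ M) (n : ℕ) :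
    ‖y ^ (n + 1)‖ ≤ M ^ n * ‖y‖ := by
  rw [norm_pow, pow_succ]
  gcongr

namespace MeasureTheory

variable {α : Type*} [MeasurableSpace α] {μ : Measure α} {f : α → ℝ} {M : ℝ}

theorem Integrable.pow_succ_of_norm_le (hf : Integrable f μ) (hfM : ∀ᵐ x ∂μ, ‖f x‖ ≤ M)
    (n : ℕ) : Integrable (fun x => f x ^ (n + 1)) μ := by
  simp_rw [pow_succ]
  refine hf.bdd_mul (c := M ^ n) (hf.aestronglyMeasurable.pow n) ?_
  filter_upwards [hfM] with x hx
  rw [norm_pow]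
  exact pow_le_pow_left₀ (norm_nonneg _) hx n

theorem hasSum_integral_mul_exp_neg (hf : Integrable f μ) (hfM : ∀ᵐ x ∂μ, ‖f x‖ ≤ M) :
    HasSum (fun n : ℕ => (-1 : ℝ) ^ n / n.factorial * ∫ x, f x ^ (n + 1) ∂μ)
      (∫ x, f x * exp (-f x) ∂μ) := by
  have hterm_int (n : ℕ) :
      Integrable (fun x => (-1 : ℝ) ^ n / n.factorial * f x ^ (n + 1)) μ :=
    (hf.pow_succ_of_norm_le hfM n).const_mul _
  have hnorm_le (n : ℕ) : ∫ x, ‖(-1 : ℝ) ^ n / n.factorial * f x ^ (n + 1)‖ ∂μ ≤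
      M ^ n / n.factorial * ∫ x, ‖f x‖ ∂μ := by
    rw [← integral_const_mul]
    refine integral_mono_ae (hterm_int n).norm (hf.norm.const_mul _) ?_
    filter_upwards [hfM] with x hx
    have hcoeff : ‖(-1 : ℝ) ^ n / n.factorial‖ = (n.factorial : ℝ)⁻¹ := by simp
    rw [norm_mul, hcoeff, div_mul_eq_mul_div, div_eq_inv_mul]
    gcongr
    exact norm_pow_succ_le_of_norm_le hx n
  have hnorm_summable :
      Summable fun n : ℕ => ∫ x, ‖(-1 : ℝ) ^ n / n.factorial * f x ^ (n + 1)‖ ∂μ :=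
    .of_nonneg_of_le (fun n => integral_nonneg fun x => norm_nonneg _) hnorm_le
      ((summable_pow_div_factorial M).mul_right _)
  simpa only [integral_const_mul, (hasSum_mul_exp_neg _).tsum_eq] using
    hasSum_integral_of_summable_integral_norm hterm_int hnorm_summable

end MeasureTheory

theorem dmim_series_general (f : ℝ → ℝ) (hf0 : ∀ x, 0 ≤ f x)
    (hf1 : (∫ x, f x) = 1) (M : ℝ) (hfM : ∀ x, f x ≤ M) :
    Summable (fun n : ℕ =>
        ((-1 : ℝ) ^ (n + 1) / (n + 1).factorial) * ∫ x, (f x) ^ (n + 2)) ∧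
      (∫ x, f x * Real.exp (-(f x))) =
        1 + ∑' n : ℕ, ((-1 : ℝ) ^ (n + 1) / (n + 1).factorial) * ∫ x, (f x) ^ (n + 2) := by
  have hf : Integrable f := .of_integral_ne_zero (by simp [hf1])
  have hbound : ∀ᵐ x, ‖f x‖ ≤ M := .of_forall fun x => by
    rw [norm_of_nonneg (hf0 x)]
    exact hfM x
  have hsum := hasSum_integral_mul_exp_neg hf hbound
  refine ⟨(summable_nat_add_iff 1).mpr hsum.summable, ?_⟩
  rw [← hsum.tsum_eq, hsum.summable.tsum_eq_zero_add]
  simp [hf1]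

/-- For a bounded measurable probability density `f`, the series
`∑_{n=1}^∞ ((-1)^n / n!) ∫ f(x)^{n+1} dx` converges (here reindexed over `n : ℕ`
via `n ↦ n+1`) and the DMIM equals `1` plus its sum. -/
theorem dmim_series (f : ℝ → ℝ) (hf : Measurable f) (hf0 : ∀ x, 0 ≤ f x)
    (hf1 : (∫ x, f x) = 1) (M : ℝ) (hM : 0 ≤ M) (hfM : ∀ x, f x ≤ M) :
    Summable (fun n : ℕ =>
        ((-1 : ℝ) ^ (n + 1) / (n + 1).factorial) * ∫ x, (f x) ^ (n + 2)) ∧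
      (∫ x, f x * Real.exp (-(f x))) =
        1 + ∑' n : ℕ, ((-1 : ℝ) ^ (n + 1) / (n + 1).factorial) * ∫ x, (f x) ^ (n + 2) :=
  dmim_series_general f hf0 hf1 M hfM
end

section
/- (Truncation error, Theorem 1.) Let f : ℝ → ℝ be a measurable probability density (f ≥ 0, ∫_ℝ f = 1) that is bounded by some constant M ≥ 0, let m ≥ 1 be a natural number, and let ε ≥ 0 be such that ∫_ℝ f(x)^{n+1} dx ≤ ε for every n ≥ m. Then |∫_ℝ f(x)·e^{-f(x)} dx − (1 + ∑_{n=1}^{m−1} ((−1)^n / n!) · ∫_ℝ f(x)^{n+1} dx)| ≤ e·ε, where e is Euler's number. -/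
/-! For `t ≥ 0` the remainder of the Taylor expansion of `e^{-t}` after `k` terms is at most
`t^k / k!`: the remainder of order `k + 1` vanishes at `0` and has derivative minus the remainder
of order `k`, so the bound follows by integrating `k` times. Taking `t = f(x)`, multiplying by
`f(x)` and integrating bounds the truncation error by `∫ f^{m+1} / m! ≤ ε`; the term
`n = 0` of the series is `∫ f = 1`, and boundedness of `f` makes every `∫ f^{n+1}` finite. -/

open MeasureTheory Real Finset

theorem hasDerivAt_sum_range_pow_div_factorial (k : ℕ) (x : ℝ) :
    HasDerivAt (fun y : ℝ => ∑ n ∈ range (k + 1), y ^ n / n.factorial)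
      (∑ n ∈ range k, x ^ n / n.factorial) x := by
  have hterm (n : ℕ) :
      HasDerivAt (fun y : ℝ => y ^ (n + 1) / (n + 1).factorial) (x ^ n / n.factorial) x := by
    refine ((hasDerivAt_pow (n + 1) x).div_const _).congr_deriv ?_
    rw [Nat.add_sub_cancel, Nat.factorial_succ]
    push_cast
    field_simp
  simp_rw [sum_range_succ' _ k]
  simpa using HasDerivAt.fun_sum fun n _ => hterm n

theorem abs_exp_neg_sub_sum_range_le (k : ℕ) {t : ℝ} (ht : 0 ≤ t) :
    |exp (-t) - ∑ n ∈ range k, (-t) ^ n / n.factorial| ≤ t ^ k / k.factorial := by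
  induction k generalizing t with
  | zero => simpa using exp_le_one_iff.2 (neg_nonpos.2 ht)
  | succ k ih =>
    set R : ℕ → ℝ → ℝ := fun j s => exp (-s) - ∑ n ∈ range j, (-s) ^ n / n.factorial
      with hR
    have hR_deriv (s : ℝ) : HasDerivAt (R (k + 1)) (-R k s) s := by
      refine ((hasDerivAt_neg' s).exp.fun_sub
        ((hasDerivAt_sum_range_pow_div_factorial k (-s)).comp s (hasDerivAt_neg' s))).congr_deriv ?_
      simp only [hR]
      ring
    have hR_zero : R (k + 1) 0 = 0 := by simp [hR, sum_range_succ']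
    have hR_cont : Continuous fun s => -R k s := by fun_prop
    calc |R (k + 1) t| = ‖∫ s in (0 : ℝ)..t, -R k s‖ := by
          rw [intervalIntegral.integral_eq_sub_of_hasDerivAt (fun s _ => hR_deriv s)
            (hR_cont.intervalIntegrable 0 t), hR_zero, sub_zero, norm_eq_abs]
      _ ≤ ∫ s in (0 : ℝ)..t, s ^ k / k.factorial := by
          refine intervalIntegral.norm_integral_le_of_norm_le ht
            (ae_of_all _ fun s hs => ?_)
            ((by fun_prop : Continuous fun s : ℝ => s ^ k / k.factorial).intervalIntegrable 0 t)
          rw [norm_neg, norm_eq_abs]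
          exact ih hs.1.le
      _ = t ^ (k + 1) / (k + 1).factorial := by
          rw [intervalIntegral.integral_div, integral_pow, Nat.factorial_succ]
          push_cast
          field_simp
          ring

theorem abs_mul_exp_neg_sub_sum_range_le (k : ℕ) {t : ℝ} (ht : 0 ≤ t) :
    |t * exp (-t) - ∑ n ∈ range k, (-1) ^ n / n.factorial * t ^ (n + 1)|
      ≤ t ^ (k + 1) / k.factorial := by
  have h : t * exp (-t) - ∑ n ∈ range k, (-1) ^ n / n.factorial * t ^ (n + 1)
      = t * (exp (-t) - ∑ n ∈ range k, (-t) ^ n / n.factorial) := by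
    simp_rw [mul_sub, mul_sum, neg_pow t]
    ring_nf
  rw [h, abs_mul, abs_of_nonneg ht, pow_succ', mul_div_assoc]
  exact mul_le_mul_of_nonneg_left (abs_exp_neg_sub_sum_range_le k ht) ht

section

variable {α : Type*} [MeasurableSpace α] {μ : Measure α} {f : α → ℝ} {M : ℝ}

theorem MeasureTheory.Integrable.pow_succ_of_ae_norm_le (hf : Integrable f μ)
    (hfM : ∀ᵐ x ∂μ, ‖f x‖ ≤ M) (n : ℕ) : Integrable (fun x => f x ^ (n + 1)) μ := by
  simp_rw [pow_succ]
  refine hf.bdd_mul (c := M ^ n) (hf.aestronglyMeasurable.pow n) ?_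
  filter_upwards [hfM] with x hx
  rw [norm_pow]
  exact pow_le_pow_left₀ (norm_nonneg _) hx n

theorem abs_integral_mul_exp_neg_sub_sum_range_le (hf : Integrable f μ) (hf0 : 0 ≤ᵐ[μ] f)
    (hfM : ∀ᵐ x ∂μ, f x ≤ M) (k : ℕ) :
    |∫ x, f x * exp (-f x) ∂μ
        - ∑ n ∈ range k, (-1) ^ n / n.factorial * ∫ x, f x ^ (n + 1) ∂μ|
      ≤ (∫ x, f x ^ (k + 1) ∂μ) / k.factorial := by
  have hf_norm : ∀ᵐ x ∂μ, ‖f x‖ ≤ M := by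
    filter_upwards [hf0, hfM] with x hx0 hxM
    rwa [norm_of_nonneg hx0]
  have hpow := hf.pow_succ_of_ae_norm_le hf_norm
  have hexp : Integrable (fun x => f x * exp (-f x)) μ := by
    refine hf.mul_bdd (c := 1)
      (continuous_exp.comp_aestronglyMeasurable hf.neg.aestronglyMeasurable) ?_
    filter_upwards [hf0] with x hx
    rw [norm_of_nonneg (exp_pos _).le]
    exact exp_le_one_iff.2 (neg_nonpos.2 hx)
  simp_rw [← integral_const_mul]
  rw [← integral_finsetSum _ fun n _ => (hpow n).const_mul _, ← integral_sub hexp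
    (integrable_finsetSum _ fun n _ => (hpow n).const_mul _), ← integral_div, ← norm_eq_abs]
  refine norm_integral_le_of_norm_le ((hpow k).div_const _) ?_
  filter_upwards [hf0] with x hx
  exact abs_mul_exp_neg_sub_sum_range_le k hx

end

theorem dmim_truncation_error_general (f : ℝ → ℝ) (hf0 : ∀ x, 0 ≤ f x)
    (hf1 : (∫ x, f x) = 1) (M : ℝ) (hfM : ∀ x, f x ≤ M)
    (m : ℕ) (hm : 1 ≤ m) (ε : ℝ)
    (hpow : ∀ n : ℕ, m ≤ n → (∫ x, (f x) ^ (n + 1)) ≤ ε) :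
    |(∫ x, f x * Real.exp (-(f x))) -
        (1 + ∑ n ∈ Finset.Icc 1 (m - 1),
          ((-1 : ℝ) ^ n / n.factorial) * ∫ x, (f x) ^ (n + 1))| ≤ Real.exp 1 * ε := by
  have hf : Integrable f := .of_integral_ne_zero (by simp [hf1])
  have hsum : 1 + ∑ n ∈ Icc 1 (m - 1), (-1 : ℝ) ^ n / n.factorial * ∫ x, f x ^ (n + 1)
      = ∑ n ∈ range m, (-1 : ℝ) ^ n / n.factorial * ∫ x, f x ^ (n + 1) := by
    rw [sum_range_eq_add_Ico _ hm,
      Icc_sub_one_right_eq_Ico_of_not_isMin (by simpa using Nat.one_le_iff_ne_zero.1 hm)]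
    simp [hf1]
  have htail_nonneg : 0 ≤ ∫ x, f x ^ (m + 1) := integral_nonneg fun x => pow_nonneg (hf0 x) _
  have htail : ∫ x, f x ^ (m + 1) ≤ ε := hpow m le_rfl
  rw [hsum]
  calc _ ≤ (∫ x, f x ^ (m + 1)) / m.factorial :=
        abs_integral_mul_exp_neg_sub_sum_range_le hf (ae_of_all _ hf0) (ae_of_all _ hfM) m
    _ ≤ ∫ x, f x ^ (m + 1) := div_le_self htail_nonneg (by exact_mod_cast m.factorial_pos)
    _ ≤ ε := htail
    _ ≤ exp 1 * ε := le_mul_of_one_le_left (htail_nonneg.trans htail) (one_le_exp zero_le_one)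

/-- Truncation error (Theorem 1): if `∫ f(x)^{n+1} dx ≤ ε` for every `n ≥ m`, then the
DMIM differs from the truncated series `1 + ∑_{n=1}^{m-1} ((-1)^n / n!) ∫ f(x)^{n+1} dx`
by at most `e·ε`. -/
theorem dmim_truncation_error (f : ℝ → ℝ) (hf : Measurable f) (hf0 : ∀ x, 0 ≤ f x)
    (hf1 : (∫ x, f x) = 1) (M : ℝ) (hM : 0 ≤ M) (hfM : ∀ x, f x ≤ M)
    (m : ℕ) (hm : 1 ≤ m) (ε : ℝ) (hε : 0 ≤ ε)
    (hpow : ∀ n : ℕ, m ≤ n → (∫ x, (f x) ^ (n + 1)) ≤ ε) :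
    |(∫ x, f x * Real.exp (-(f x))) -
        (1 + ∑ n ∈ Finset.Icc 1 (m - 1),
          ((-1 : ℝ) ^ n / n.factorial) * ∫ x, (f x) ^ (n + 1))| ≤ Real.exp 1 * ε :=
  dmim_truncation_error_general f hf0 hf1 M hfM m hm ε hpow
end

section
/- (Remark 1, second-order truncation.) Let f : ℝ → ℝ be a measurable probability density (f ≥ 0, ∫_ℝ f = 1) that is bounded by some constant M ≥ 0, and let ε ≥ 0 be such that ∫_ℝ f(x)^{n+1} dx ≤ ε for every n ≥ 2. Then |∫_ℝ f(x)·e^{-f(x)} dx − (1 − ∫_ℝ f(x)^2 dx)| ≤ (e − 2)·ε, where e is Euler's number. -/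
/-!
Pointwise, `t - t² ≤ t e^{-t} ≤ t - t² + t³/2` for `t ≥ 0` (the Taylor series of `e^{-t}` is
alternating), so substituting `t = f x` and integrating bounds the error of the truncation by `½ ∫ f³ ≤ ε / 2`,
and `1/2 ≤ e - 2`.
-/

open MeasureTheory Real

namespace Real

/-- Obtained from `1 + t + t²/2 ≤ eᵗ`, since `(1 - t + t²/2)(1 + t + t²/2) = 1 + t⁴/4 ≥ 1`. -/
lemma exp_neg_le_one_sub_add_sq_div_two {t : ℝ} (ht : 0 ≤ t) :
    exp (-t) ≤ 1 - t + t ^ 2 / 2 := by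
  have hpos : 0 < 1 + t + t ^ 2 / 2 := by positivity
  rw [exp_neg]
  calc (exp t)⁻¹ ≤ (1 + t + t ^ 2 / 2)⁻¹ := inv_anti₀ hpos (quadratic_le_exp_of_nonneg ht)
    _ ≤ 1 - t + t ^ 2 / 2 := by
      rw [inv_le_iff_one_le_mul₀ hpos]
      nlinarith [pow_nonneg ht 4]

lemma abs_mul_exp_neg_sub_le {t : ℝ} (ht : 0 ≤ t) :
    |t * exp (-t) - (t - t ^ 2)| ≤ t ^ 3 / 2 := by
  have hlower := mul_le_mul_of_nonneg_left (one_sub_le_exp_neg t) ht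
  have hupper := mul_le_mul_of_nonneg_left (exp_neg_le_one_sub_add_sq_div_two ht) ht
  rw [abs_le]
  constructor <;> nlinarith [pow_nonneg ht 3]

end Real

namespace MeasureTheory

variable {α : Type*} [MeasurableSpace α] {μ : Measure α} {f : α → ℝ}

lemma Integrable.sq_of_pow_three (hf : Integrable f μ) (hf3 : Integrable (fun x ↦ f x ^ 3) μ) :
    Integrable (fun x ↦ f x ^ 2) μ := by
  refine (hf.norm.add hf3.norm).mono' (hf.aestronglyMeasurable.pow 2) (ae_of_all _ fun x ↦ ?_)
  have ha := abs_nonneg (f x)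
  simp only [Real.norm_eq_abs, abs_pow, Pi.add_apply]
  nlinarith [sq_nonneg (|f x| - 1), mul_nonneg ha (sq_nonneg (|f x| - 1))]

lemma abs_integral_mul_exp_neg_sub_le (hf0 : 0 ≤ᵐ[μ] f) (hf : Integrable f μ)
    (hf3 : Integrable (fun x ↦ f x ^ 3) μ) :
    |(∫ x, f x * exp (-f x) ∂μ) - ((∫ x, f x ∂μ) - ∫ x, f x ^ 2 ∂μ)| ≤ (∫ x, f x ^ 3 ∂μ) / 2 := by
  have hf2 := hf.sq_of_pow_three hf3
  have hexp : Integrable (fun x ↦ f x * exp (-f x)) μ := by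
    refine hf.mul_bdd (c := 1) (continuous_exp.comp_aestronglyMeasurable hf.aestronglyMeasurable.neg)
      (hf0.mono fun x hx ↦ ?_)
    simpa [Real.norm_eq_abs, abs_exp] using hx
  have hquad : Integrable (fun x ↦ f x - f x ^ 2) μ := hf.sub hf2
  rw [← integral_sub hf hf2, ← integral_sub hexp hquad, ← integral_div]
  calc |∫ x, f x * exp (-f x) - (f x - f x ^ 2) ∂μ|
      ≤ ∫ x, |f x * exp (-f x) - (f x - f x ^ 2)| ∂μ := abs_integral_le_integral_abs
    _ ≤ ∫ x, f x ^ 3 / 2 ∂μ :=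
      integral_mono_ae (hexp.sub hquad).abs (hf3.div_const 2)
        (hf0.mono fun x hx ↦ abs_mul_exp_neg_sub_le hx)

end MeasureTheory

theorem dmim_second_order_truncation_general (f : ℝ → ℝ) (hf0 : ∀ x, 0 ≤ f x)
    (hf1 : (∫ x, f x) = 1) (M : ℝ) (hfM : ∀ x, f x ≤ M)
    (ε : ℝ)
    (hpow : ∀ n : ℕ, 2 ≤ n → (∫ x, (f x) ^ (n + 1)) ≤ ε) :
    |(∫ x, f x * Real.exp (-(f x))) - (1 - ∫ x, (f x) ^ 2)| ≤ (Real.exp 1 - 2) * ε := by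
  have hf : Integrable f := Integrable.of_integral_ne_zero (by simp [hf1])
  have hf3 : Integrable (fun x ↦ f x ^ 3) := by
    refine (hf.bdd_mul (c := M ^ 2) (hf.aestronglyMeasurable.pow 2)
      (ae_of_all _ fun x ↦ ?_)).congr (ae_of_all _ fun x ↦ (pow_succ (f x) 2).symm)
    rw [Real.norm_eq_abs, abs_of_nonneg (sq_nonneg _)]
    exact pow_le_pow_left₀ (hf0 x) (hfM x) 2
  have hε : (∫ x, f x ^ 3) ≤ ε := hpow 2 le_rfl
  have hε0 : 0 ≤ ε := (integral_nonneg fun x ↦ pow_nonneg (hf0 x) 3).trans hε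
  have he : (1 : ℝ) / 2 ≤ exp 1 - 2 := by linarith [exp_one_gt_d9]
  calc _ ≤ (∫ x, f x ^ 3) / 2 := hf1 ▸ abs_integral_mul_exp_neg_sub_le (ae_of_all _ hf0) hf hf3
    _ ≤ (exp 1 - 2) * ε := by nlinarith

/-- Remark 1 (second-order truncation): if `∫ f(x)^{n+1} dx ≤ ε` for every `n ≥ 2`, then
`|∫ f(x) e^{-f(x)} dx - (1 - ∫ f(x)^2 dx)| ≤ (e - 2)·ε`. -/
theorem dmim_second_order_truncation (f : ℝ → ℝ) (hf : Measurable f) (hf0 : ∀ x, 0 ≤ f x)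
    (hf1 : (∫ x, f x) = 1) (M : ℝ) (hM : 0 ≤ M) (hfM : ∀ x, f x ≤ M)
    (ε : ℝ) (hε : 0 ≤ ε)
    (hpow : ∀ n : ℕ, 2 ≤ n → (∫ x, (f x) ^ (n + 1)) ≤ ε) :
    |(∫ x, f x * Real.exp (-(f x))) - (1 - ∫ x, (f x) ^ 2)| ≤ (Real.exp 1 - 2) * ε :=
  dmim_second_order_truncation_general f hf0 hf1 M hfM ε hpow
end

section
/- For every σ ≥ 1/√(2π) and μ ∈ ℝ, the DMIM of the Gaussian density φ(x) = (2πσ²)^{-1/2}·e^{-(x−μ)²/(2σ²)} satisfies |∫_ℝ φ(x)·e^{-φ(x)} dx − (1 − 1/(2√π·σ))| ≤ (e − 2)/(2√3·π·σ²), where e is Euler's number. -/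
open MeasureTheory Real ProbabilityTheory
open scoped NNReal

/-!
Since `0 ≤ e^{-t} - 1 + t ≤ t²/2` for `t ≥ 0`, the DMIM of a density `f` lies between
`∫ f - ∫ f²` and `∫ f - ∫ f² + ½ ∫ f³`. For the Gaussian density, `φⁿ` is a multiple of a Gaussian
of variance `σ²/n`, so `∫ φ = 1`, `∫ φ² = 1/(2√π σ)` and `∫ φ³ = 1/(2√3 π σ²)`;
the error `½ ∫ φ³` is then at most `(e - 2) ∫ φ³` because `e ≥ 5/2`.
-/

lemma Real.exp_neg_le_one_sub_add_sq_div_two_s9 {t : ℝ} (ht : 0 ≤ t) :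
    exp (-t) ≤ 1 - t + t ^ 2 / 2 := by
  have hpos : 0 < 1 + t + t ^ 2 / 2 := by positivity
  calc exp (-t) = (exp t)⁻¹ := exp_neg t
    _ ≤ (1 + t + t ^ 2 / 2)⁻¹ := inv_anti₀ hpos (quadratic_le_exp_of_nonneg ht)
    _ ≤ 1 - t + t ^ 2 / 2 := by
      rw [inv_le_iff_one_le_mul₀ hpos]
      nlinarith [sq_nonneg (t ^ 2)]

theorem abs_integral_mul_exp_neg_sub_le {α : Type*} [MeasurableSpace α] {μ : Measure α}
    {f : α → ℝ} (hf : ∀ x, 0 ≤ f x) (hf₁ : Integrable f μ) (hf₂ : Integrable (fun x ↦ f x ^ 2) μ)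
    (hf₃ : Integrable (fun x ↦ f x ^ 3) μ) :
    |∫ x, f x * exp (-f x) ∂μ - (∫ x, f x ∂μ - ∫ x, f x ^ 2 ∂μ)| ≤ (∫ x, f x ^ 3 ∂μ) / 2 := by
  have hint : Integrable (fun x ↦ f x * exp (-f x)) μ := by
    refine hf₁.mono ((by fun_prop : Continuous fun t ↦ t * exp (-t)).comp_aestronglyMeasurable
      hf₁.aestronglyMeasurable) (Filter.Eventually.of_forall fun x ↦ ?_)
    have hx := hf x
    rw [norm_of_nonneg (by positivity), norm_of_nonneg hx]
    exact mul_le_of_le_one_right hx (exp_le_one_iff.2 (by linarith))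
  have hremainder : ∫ x, f x * exp (-f x) ∂μ - (∫ x, f x ∂μ - ∫ x, f x ^ 2 ∂μ) =
      ∫ x, f x * (exp (-f x) - 1 + f x) ∂μ := by
    have hf₁₂ : Integrable (fun x ↦ f x - f x ^ 2) μ := hf₁.sub hf₂
    rw [← integral_sub hf₁ hf₂, ← integral_sub hint hf₁₂]
    congr 1 with x
    ring
  have hnonneg : ∀ x, 0 ≤ f x * (exp (-f x) - 1 + f x) := fun x ↦
    mul_nonneg (hf x) (by linarith [add_one_le_exp (-f x)])
  rw [hremainder, abs_of_nonneg (integral_nonneg hnonneg), ← integral_div]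
  refine integral_mono_of_nonneg (.of_forall hnonneg) (hf₃.div_const 2) (.of_forall fun x ↦ ?_)
  have hx := hf x
  calc f x * (exp (-f x) - 1 + f x) ≤ f x * (f x ^ 2 / 2) := by
        gcongr
        linarith [exp_neg_le_one_sub_add_sq_div_two_s9 hx]
    _ = f x ^ 3 / 2 := by ring

namespace ProbabilityTheory

lemma gaussianPDFReal_pow (μ : ℝ) (v : ℝ≥0) (n : ℕ) (x : ℝ) :
    gaussianPDFReal μ v x ^ n = (√(2 * π * v))⁻¹ ^ n * exp (-(n / (2 * v)) * (x - μ) ^ 2) := by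
  rw [gaussianPDFReal, mul_pow, ← exp_nat_mul]
  ring_nf

lemma integrable_gaussianPDFReal_pow (μ : ℝ) {v : ℝ≥0} (hv : v ≠ 0) {n : ℕ} (hn : n ≠ 0) :
    Integrable (fun x ↦ gaussianPDFReal μ v x ^ n) := by
  have : (0 : ℝ) < v := by positivity
  have : (0 : ℝ) < n := by positivity
  simp_rw [gaussianPDFReal_pow]
  exact ((integrable_exp_neg_mul_sq (by positivity)).comp_sub_right μ).const_mul _

lemma integral_gaussianPDFReal_pow (μ : ℝ) {v : ℝ≥0} (hv : v ≠ 0) {n : ℕ} (hn : n ≠ 0) :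
    ∫ x, gaussianPDFReal μ v x ^ n = (√(2 * π * v))⁻¹ ^ n * √(2 * π * v / n) := by
  have : (0 : ℝ) < v := by positivity
  have : (0 : ℝ) < n := by positivity
  simp_rw [gaussianPDFReal_pow, integral_const_mul,
    integral_sub_right_eq_self (fun x ↦ exp (-(n / (2 * v)) * x ^ 2)), integral_gaussian]
  congr 2
  field_simp

end ProbabilityTheory

/-- For `σ ≥ 1/√(2π)`, the DMIM of the Gaussian density `φ` satisfies
`|∫ φ(x) e^{-φ(x)} dx - (1 - 1/(2√π·σ))| ≤ (e-2)/(2√3·π·σ²)`. -/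
theorem dmim_gaussian_approx (σ μ : ℝ) (hσ : 1 / Real.sqrt (2 * π) ≤ σ) :
    |(∫ x : ℝ,
          ((Real.sqrt (2 * π * σ ^ 2))⁻¹ * Real.exp (-(x - μ) ^ 2 / (2 * σ ^ 2))) *
            Real.exp
              (-((Real.sqrt (2 * π * σ ^ 2))⁻¹ * Real.exp (-(x - μ) ^ 2 / (2 * σ ^ 2))))) -
        (1 - 1 / (2 * Real.sqrt π * σ))| ≤
      (Real.exp 1 - 2) / (2 * Real.sqrt 3 * π * σ ^ 2) := by
  have hσ₀ : 0 < σ := lt_of_lt_of_le (by positivity) hσ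
  set v : ℝ≥0 := ⟨σ ^ 2, sq_nonneg σ⟩
  have hv_coe : (v : ℝ) = σ ^ 2 := rfl
  have hv : v ≠ 0 := by rw [← NNReal.coe_ne_zero, hv_coe]; positivity
  have hφ : ∀ x, (√(2 * π * σ ^ 2))⁻¹ * exp (-(x - μ) ^ 2 / (2 * σ ^ 2)) =
      gaussianPDFReal μ v x := fun x ↦ rfl
  have h₂ : ∫ x, gaussianPDFReal μ v x ^ 2 = 1 / (2 * √π * σ) := by
    rw [integral_gaussianPDFReal_pow μ hv two_ne_zero, hv_coe, inv_pow,
      sq_sqrt (by positivity), show 2 * π * σ ^ 2 / (2 : ℕ) = π * σ ^ 2 by push_cast; ring,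
      sqrt_mul pi_pos.le, sqrt_sq hσ₀.le]
    field_simp
    rw [sq_sqrt pi_pos.le]
  have h₃ : ∫ x, gaussianPDFReal μ v x ^ 3 = 1 / (2 * √3 * π * σ ^ 2) := by
    rw [integral_gaussianPDFReal_pow μ hv three_ne_zero, hv_coe, Nat.cast_ofNat,
      sqrt_div' _ (by norm_num : (0 : ℝ) ≤ 3)]
    field_simp
    rw [sq_sqrt (by positivity)]
  have he : 1 / 2 ≤ exp 1 - 2 := by linarith [exp_one_gt_d9]
  simp only [hφ]
  calc _ ≤ (∫ x, gaussianPDFReal μ v x ^ 3) / 2 := by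
        simpa [integral_gaussianPDFReal_eq_one μ hv, h₂] using
          abs_integral_mul_exp_neg_sub_le (gaussianPDFReal_nonneg μ v)
            (integrable_gaussianPDFReal μ v) (integrable_gaussianPDFReal_pow μ hv two_ne_zero)
            (integrable_gaussianPDFReal_pow μ hv three_ne_zero)
    _ ≤ _ := by
        rw [h₃, div_right_comm]
        gcongr
end

section
/- For every λ > 0, the DMIM of the negative exponential density equals (1 − e^{-λ})/λ; that is, ∫_0^∞ λ·e^{-λx}·exp(−λ·e^{-λx}) dx = (1/λ)·(1 − e^{-λ}). -/
/-!
With `f x = λ e^{-λx}` we have `f' = -λ f`, so `f e^{-f}` is the derivative of `e^{-f} / λ`.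
This antiderivative is `e^{-λ} / λ` at `0` and tends to `1 / λ` at infinity, because `f → 0`.
-/

open MeasureTheory Real Filter Topology

lemma hasDerivAt_exp_neg_mul_exp_neg_mul_div {lam : ℝ} (hlam : lam ≠ 0) (x : ℝ) :
    HasDerivAt (fun x => exp (-(lam * exp (-lam * x))) / lam)
      (lam * exp (-lam * x) * exp (-(lam * exp (-lam * x)))) x := by
  have hdensity : HasDerivAt (fun x => lam * exp (-lam * x)) (-lam * (lam * exp (-lam * x))) x :=
    (((hasDerivAt_id x).const_mul (-lam)).exp.const_mul lam).congr_deriv (by rw [id]; ring)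
  exact (hdensity.neg.exp.div_const lam).congr_deriv (by rw [Pi.neg_apply]; field_simp)

lemma tendsto_exp_neg_mul_exp_neg_mul_div_atTop {lam : ℝ} (hlam : 0 < lam) :
    Tendsto (fun x => exp (-(lam * exp (-lam * x))) / lam) atTop (𝓝 (1 / lam)) := by
  have hdensity : Tendsto (fun x => -(lam * exp (-lam * x))) atTop (𝓝 0) := by
    simpa using ((tendsto_exp_atBot.comp
      (tendsto_id.const_mul_atTop_of_neg (neg_neg_of_pos hlam))).const_mul lam).neg
  simpa using ((continuous_exp.tendsto 0).comp hdensity).div_const lam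

/-- The DMIM of the negative exponential density with rate `λ > 0` equals
`(1/λ)(1 - e^{-λ})`. -/
theorem dmim_exponential (lam : ℝ) (hlam : 0 < lam) :
    (∫ x in Set.Ioi (0 : ℝ),
        lam * Real.exp (-lam * x) * Real.exp (-(lam * Real.exp (-lam * x)))) =
      (1 / lam) * (1 - Real.exp (-lam)) := by
  rw [integral_Ioi_of_hasDerivAt_of_nonneg'
    (fun x _ => hasDerivAt_exp_neg_mul_exp_neg_mul_div hlam.ne' x)
    (fun x _ => by positivity) (tendsto_exp_neg_mul_exp_neg_mul_div_atTop hlam)]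
  simp only [mul_zero, exp_zero, mul_one]
  ring
end

section
/- Let σ > 0, let L be a real number with 0 < L ≤ 1, let ε > 0 satisfy ε·L < 1, and let n > 0 be a real number. If (1/L) − e^{-1/(2·√(πn)·σ)}/L ≤ ε, then n ≥ 1/(4π·σ²·(ln(1 − ε·L))²). -/
open Real

/-- If the DMIM deviation `(1/L) - e^{-1/(2√(πn)σ)}/L` is at most `ε`, then
`n ≥ 1/(4πσ²·(ln(1 - εL))²)`. -/
theorem sample_size_lower_bound (σ L ε n : ℝ) (hσ : 0 < σ) (hL0 : 0 < L) (hL1 : L ≤ 1)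
    (hε : 0 < ε) (hεL : ε * L < 1) (hn : 0 < n)
    (h : 1 / L - Real.exp (-(1 / (2 * Real.sqrt (π * n) * σ))) / L ≤ ε) :
    n ≥ 1 / (4 * π * σ ^ 2 * (Real.log (1 - ε * L)) ^ 2) := by
  set s := Real.sqrt (π * n) with hs_def
  have hπn : 0 < π * n := mul_pos Real.pi_pos hn
  have hs : 0 < s := Real.sqrt_pos.mpr hπn
  have hs2 : s ^ 2 = π * n := Real.sq_sqrt hπn.le
  set x := 1 / (2 * s * σ) with hx_def
  have hxpos : 0 < x := by positivity
  have h1 : 1 - Real.exp (-x) ≤ ε * L := by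
    have := mul_le_mul_of_nonneg_right h hL0.le
    have hL' : L ≠ 0 := hL0.ne'
    field_simp at this
    nlinarith [this]
  have hpos : 0 < 1 - ε * L := by linarith
  have hE : 1 - ε * L ≤ Real.exp (-x) := by linarith
  have hlog : Real.log (1 - ε * L) ≤ -x := by
    calc Real.log (1 - ε * L) ≤ Real.log (Real.exp (-x)) := Real.log_le_log hpos hE
    _ = -x := Real.log_exp _
  set t := -Real.log (1 - ε * L) with ht_def
  have hxt : x ≤ t := by linarith
  have htpos : 0 < t := lt_of_lt_of_le hxpos hxt
  have key : 1 ≤ 2 * s * σ * t := by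
    have h' : 1 / (2 * s * σ) ≤ t := hxt
    rw [div_le_iff₀ (by positivity)] at h'
    nlinarith
  have hlogsq : (Real.log (1 - ε * L)) ^ 2 = t ^ 2 := by rw [ht_def]; ring
  rw [ge_iff_le, hlogsq, div_le_iff₀ (by positivity)]
  nlinarith [sq_nonneg (2 * s * σ * t - 1), hs2, mul_pos (mul_pos hs hσ) htpos]
end

section
/- Let σ > 0, let β satisfy 0 < β ≤ 1, let ε satisfy 0 < ε < 1, put d = √(2π·σ²·ln(19/(9β))) · ln(1/(1 − ε)), and let n be a real number with n ≥ 1/(4π·σ²·(ln(1 − ε))²). Then 2·e^{-2n·d²}/(1 − e^{-8n·d²}) ≤ β. -/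
open Real

/-- With `d = √(2πσ²·ln(19/(9β)))·ln(1/(1-ε))` and `n ≥ 1/(4πσ²·(ln(1-ε))²)`,
one has `2e^{-2nd²}/(1 - e^{-8nd²}) ≤ β`. -/
theorem ks_geometric_bound_le_beta (σ β ε n : ℝ) (hσ : 0 < σ) (hβ0 : 0 < β) (hβ : β ≤ 1)
    (hε0 : 0 < ε) (hε1 : ε < 1)
    (hn : n ≥ 1 / (4 * π * σ ^ 2 * (Real.log (1 - ε)) ^ 2)) :
    2 * Real.exp (-2 * n *
          (Real.sqrt (2 * π * σ ^ 2 * Real.log (19 / (9 * β))) *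
            Real.log (1 / (1 - ε))) ^ 2) /
        (1 - Real.exp (-8 * n *
          (Real.sqrt (2 * π * σ ^ 2 * Real.log (19 / (9 * β))) *
            Real.log (1 / (1 - ε))) ^ 2)) ≤ β := by
  have hπ : (0:ℝ) < π := Real.pi_pos
  set c := Real.log (19 / (9 * β)) with hcdef
  have hx : (1:ℝ) < 19 / (9 * β) := by
    rw [lt_div_iff₀ (by positivity)]; nlinarith
  have hc : 0 < c := Real.log_pos hx
  have h1ε : 0 < 1 - ε := by linarith
  set L := Real.log (1 / (1 - ε)) with hLdef
  have hLneg : L = - Real.log (1 - ε) := by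
    rw [hLdef, one_div, Real.log_inv]
  have hL : 0 < L := Real.log_pos (by rw [lt_div_iff₀ h1ε]; linarith)
  have hL2 : (Real.log (1 - ε)) ^ 2 = L ^ 2 := by rw [hLneg]; ring
  have hA : (0:ℝ) ≤ 2 * π * σ ^ 2 * c := by positivity
  have hsq : (Real.sqrt (2 * π * σ ^ 2 * c) * L) ^ 2 = 2 * π * σ ^ 2 * c * L ^ 2 := by
    rw [mul_pow, Real.sq_sqrt hA]
  have hden : (0:ℝ) < 4 * π * σ ^ 2 * L ^ 2 := by positivity
  have hn' : n ≥ 1 / (4 * π * σ ^ 2 * L ^ 2) := by rwa [hL2] at hn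
  have hnd : c ≤ 2 * n * (Real.sqrt (2 * π * σ ^ 2 * c) * L) ^ 2 := by
    rw [hsq]
    have h0 : 1 / (4 * π * σ ^ 2 * L ^ 2) * (4 * π * σ ^ 2 * L ^ 2) = 1 :=
      one_div_mul_cancel (ne_of_gt hden)
    nlinarith [mul_le_mul_of_nonneg_right hn' (le_of_lt hden)]
  have hu : Real.exp (-2 * n * (Real.sqrt (2 * π * σ ^ 2 * c) * L) ^ 2) ≤ 9 * β / 19 := by
    have : Real.exp (-2 * n * (Real.sqrt (2 * π * σ ^ 2 * c) * L) ^ 2) ≤ Real.exp (-c) := by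
      apply Real.exp_le_exp.mpr; linarith
    calc Real.exp (-2 * n * (Real.sqrt (2 * π * σ ^ 2 * c) * L) ^ 2) ≤ Real.exp (-c) := this
      _ = 9 * β / 19 := by
          rw [hcdef, Real.exp_neg, Real.exp_log (by positivity)]
          rw [inv_div]
  have hv : Real.exp (-8 * n * (Real.sqrt (2 * π * σ ^ 2 * c) * L) ^ 2) ≤ (9 / 19) ^ 4 := by
    have h4 : Real.exp (-8 * n * (Real.sqrt (2 * π * σ ^ 2 * c) * L) ^ 2)
        ≤ Real.exp ((4:ℕ) * (-c)) := by
      apply Real.exp_le_exp.mpr; push_cast; nlinarith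
    calc Real.exp (-8 * n * (Real.sqrt (2 * π * σ ^ 2 * c) * L) ^ 2)
        ≤ Real.exp ((4:ℕ) * (-c)) := h4
      _ = Real.exp (-c) ^ 4 := Real.exp_nat_mul _ 4
      _ ≤ (9 / 19) ^ 4 := by
          apply pow_le_pow_left₀ (le_of_lt (Real.exp_pos _))
          rw [hcdef, Real.exp_neg, Real.exp_log (by positivity), inv_div]
          rw [div_le_div_iff₀ (by norm_num) (by norm_num)]; nlinarith
  set u := Real.exp (-2 * n * (Real.sqrt (2 * π * σ ^ 2 * c) * L) ^ 2) with hudef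
  set v := Real.exp (-8 * n * (Real.sqrt (2 * π * σ ^ 2 * c) * L) ^ 2) with hvdef
  have hvpos : 0 < v := Real.exp_pos _
  have hupos : 0 < u := Real.exp_pos _
  have hv1 : 1 - v > 0 := by nlinarith [hv]
  rw [div_le_iff₀ hv1]
  nlinarith [hv, hu]
end

section
/- (Rigorous core of Theorem 2.) Let σ > 0, let β satisfy 0 < β ≤ 1, let ε satisfy 0 < ε < 1, put d = √(2π·σ²·ln(19/(9β))) · ln(1/(1 − ε)), and let n be a real number with n ≥ 1/(4π·σ²·(ln(1 − ε))²). Then 2·∑_{k=1}^∞ (−1)^{k−1}·e^{-2n·k²·d²} < β. -/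
/-!
The Kolmogorov–Smirnov tail `2 ∑ (-1)^(k-1) e^{-2nk²d²}` is an alternating series with
decreasing terms, so it is at most twice its first term `2 e^{-2nd²}`. The lower bound on `n`
is chosen so that `2nd² ≥ ln(19/(9β))`, whence the tail is at most `2 · 9β/19 < β`.
-/

open Real

theorem Antitone.tsum_alternating_le {E : Type*} [Ring E] [PartialOrder E] [IsOrderedRing E]
    [UniformSpace E] [IsUniformAddGroup E] [CompleteSpace E] [OrderClosedTopology E]
    {f : ℕ → E} (hfa : Antitone f) (hfs : Summable f) :
    ∑' i, (-1) ^ i * f i ≤ f 0 := by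
  simpa using hfa.tendsto_le_alternating_series hfs.tendsto_alternating_series_tsum 0

lemma tsum_alternating_exp_neg_mul_succ_sq_le {c : ℝ} (hc : 0 < c) :
    ∑' k : ℕ, (-1 : ℝ) ^ k * exp (-c * ((k : ℝ) + 1) ^ 2) ≤ exp (-c) := by
  have hanti : Antitone fun k : ℕ ↦ exp (-c * ((k : ℝ) + 1) ^ 2) := fun a b hab ↦ by
    simp only [neg_mul]
    gcongr
  have hsum : Summable fun k : ℕ ↦ exp (-c * ((k : ℝ) + 1) ^ 2) :=
    summable_exp_nat_mul_of_ge (neg_lt_zero.mpr hc) fun k ↦ by nlinarith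
  simpa using hanti.tsum_alternating_le hsum

lemma le_two_mul_mul_sqrt_mul_sq {σ a L n : ℝ} (hσ : σ ≠ 0) (ha : a ≠ 0) (hL : 0 ≤ L)
    (hn : 1 / (4 * π * σ ^ 2 * a ^ 2) ≤ n) :
    L ≤ 2 * n * (√(2 * π * σ ^ 2 * L) * a) ^ 2 := by
  have hP : 0 < 4 * π * σ ^ 2 * a ^ 2 := by positivity
  have hnP : 1 ≤ n * (4 * π * σ ^ 2 * a ^ 2) := (div_le_iff₀ hP).mp hn
  calc L ≤ L * (n * (4 * π * σ ^ 2 * a ^ 2)) := le_mul_of_one_le_right hL hnP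
    _ = 2 * n * (√(2 * π * σ ^ 2 * L) * a) ^ 2 := by
      rw [mul_pow, sq_sqrt (by positivity)]
      ring

/-- Rigorous core of Theorem 2: with `d = √(2πσ²·ln(19/(9β)))·ln(1/(1-ε))` and
`n ≥ 1/(4πσ²·(ln(1-ε))²)`, the Kolmogorov–Smirnov tail series satisfies
`2∑_{k=1}^∞ (-1)^{k-1} e^{-2n k² d²} < β` (series reindexed over `k : ℕ` via `k ↦ k+1`). -/
theorem ks_tail_lt_beta (σ β ε n : ℝ) (hσ : 0 < σ) (hβ0 : 0 < β) (hβ : β ≤ 1)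
    (hε0 : 0 < ε) (hε1 : ε < 1)
    (hn : n ≥ 1 / (4 * π * σ ^ 2 * (Real.log (1 - ε)) ^ 2)) :
    2 * ∑' k : ℕ, (-1 : ℝ) ^ k *
        Real.exp (-2 * n * ((k : ℝ) + 1) ^ 2 *
          (Real.sqrt (2 * π * σ ^ 2 * Real.log (19 / (9 * β))) *
            Real.log (1 / (1 - ε))) ^ 2) < β := by
  set L := Real.log (19 / (9 * β))
  have hL : 0 < L := Real.log_pos <| by rw [lt_div_iff₀ (by positivity)]; linarith
  have hlog : Real.log (1 - ε) ≠ 0 := (Real.log_neg (by linarith) (by linarith)).ne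
  set d := Real.sqrt (2 * π * σ ^ 2 * L) * Real.log (1 / (1 - ε))
  have hLd : L ≤ 2 * n * d ^ 2 := by
    have := le_two_mul_mul_sqrt_mul_sq hσ.ne' hlog hL.le hn
    rwa [← neg_sq, ← mul_neg, ← Real.log_inv, ← one_div] at this
  calc 2 * ∑' k : ℕ, (-1 : ℝ) ^ k * exp (-2 * n * ((k : ℝ) + 1) ^ 2 * d ^ 2)
      = 2 * ∑' k : ℕ, (-1 : ℝ) ^ k * exp (-(2 * n * d ^ 2) * ((k : ℝ) + 1) ^ 2) := by
        congr 1; exact tsum_congr fun k ↦ by ring_nf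
    _ ≤ 2 * exp (-(2 * n * d ^ 2)) := by
        gcongr
        exact tsum_alternating_exp_neg_mul_succ_sq_le (hL.trans_le hLd)
    _ ≤ 2 * exp (-L) := by gcongr
    _ = 2 * (9 * β / 19) := by rw [exp_neg, exp_log (by positivity), inv_div]
    _ < β := by linarith
end
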